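/- arXiv:2506.06940 — 2 statements merged into one kernel-verified Lean document; each statement's English description precedes it below -/
import Mathlib

section
/- Consider the two-layer minimalist model trained with gradient flow, with dataset difficulty Q > 0: let θ(t) satisfy dθ/dt = −∇L(θ(t)) for t ≥ 0, and assume θ(t) converges as t → ∞ to a limit θ(∞) with L(θ(∞)) = 0. Then the sharpness at convergence satisfies (1/N)·[σ₁²(v₁^∞)² + d₁²/(v₁^∞)²] ≤ S(θ(∞)) ≤ (1/N)·[σ₁²(v₁^∞)² + (Σ_{i=1}^r d_i²)/(v₁^∞)²], where (v₁^∞)² = (√(C(θ(0))² + 4Q) − C(θ(0)))/2 is determined by the layer imbalance at initialization. -/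
open scoped BigOperators

/-- Sharpness `S(θ) = λ_max(∇²L(θ))`: the largest eigenvalue of the Hessian of `L` at `θ`,
expressed as the supremum of the Hessian quadratic form over the unit sphere. -/
noncomputable def sharpness {E : Type*} [NormedAddCommGroup E] [NormedSpace ℝ E]
    (L : E → ℝ) (θ : E) : ℝ :=
  sSup {c : ℝ | ∃ ξ : E, ‖ξ‖ = 1 ∧ fderiv ℝ (fderiv ℝ L) θ ξ ξ = c}

/-!
The loss is invariant under scaling every `o_i` by `eˢ` and `v₁` by `e⁻ˢ`; the generator of this
symmetry is half the gradient of the imbalance `C`, so the two gradients are orthogonal and `C` is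
conserved along the flow and in the limit. A zero-loss point has `σ_i o_i v₁ = d_i`, so there
`C = Q / v₁² - v₁²`, and solving this quadratic in `v₁²` gives the limit. Since the residuals
vanish, the Hessian there is the Gauss-Newton form `(1/N) ∑ᵢ (σᵢ v₁ ⟪wᵢ, ξ⟫ + dᵢ ⟪b, ξ⟫ / v₁)²`;
Bessel's inequality and Cauchy-Schwarz bound it on the unit sphere, and the unit vector along
`σ₁ v₁ • w₁ + (d₁ / v₁) • b` attains the lower bound.
-/

open scoped InnerProductSpace
open Filter Topology

theorem Orthonormal.inner_sumElim_inl_inr {E : Type*} [NormedAddCommGroup E]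
    [InnerProductSpace ℝ E] {ι κ : Type*} {v : ι → E} {u : κ → E}
    (h : Orthonormal ℝ (Sum.elim v u)) (i : ι) (j : κ) : ⟪v i, u j⟫_ℝ = 0 :=
  h.inner_eq_zero Sum.inl_ne_inr

section GaussNewton

variable {E : Type*} [NormedAddCommGroup E] [NormedSpace ℝ E] {ι : Type*} [Fintype ι]
  {r : ι → E → ℝ} {r' : ι → E → E →L[ℝ] ℝ}

theorem hasFDerivAt_const_mul_sum_sq (c : ℝ) (hr : ∀ i x, HasFDerivAt (r i) (r' i x) x)
    (x : E) :
    HasFDerivAt (fun θ => c * ∑ i, r i θ ^ 2) (∑ i, (2 * c * r i x) • r' i x) x := by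
  refine ((HasFDerivAt.fun_sum fun i _ => (hr i x).pow 2).const_mul c).congr_fderiv ?_
  ext ξ
  simp [Finset.mul_sum, mul_assoc, mul_left_comm]

theorem fderiv_fderiv_const_mul_sum_sq_apply (c : ℝ) (hr : ∀ i x, HasFDerivAt (r i) (r' i x) x)
    {x : E} (hr' : ∀ i, DifferentiableAt ℝ (r' i) x) (h0 : ∀ i, r i x = 0) (ξ : E) :
    fderiv ℝ (fderiv ℝ (fun θ => c * ∑ i, r i θ ^ 2)) x ξ ξ = 2 * c * ∑ i, r' i x ξ ^ 2 := by
  have hD : fderiv ℝ (fun θ => c * ∑ i, r i θ ^ 2) = fun y => ∑ i, (2 * c * r i y) • r' i y :=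
    funext fun y => (hasFDerivAt_const_mul_sum_sq c hr y).fderiv
  have hD2 := HasFDerivAt.fun_sum (u := Finset.univ) fun i _ =>
    (((hr i x).const_mul (2 * c)).fun_smul (hr' i).hasFDerivAt)
  rw [hD, hD2.fderiv]
  simp [h0, Finset.mul_sum, sq, mul_assoc]

end GaussNewton

section GradientFlow

variable {E : Type*} [NormedAddCommGroup E] [InnerProductSpace ℝ E] [CompleteSpace E]
  {F L : E → ℝ} {γ : ℝ → E}

theorem comp_eq_of_inner_gradient_eq_zero (hF : Differentiable ℝ F)
    (horth : ∀ x, ⟪gradient F x, gradient L x⟫_ℝ = 0)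
    (hγ : ∀ t, 0 ≤ t → HasDerivAt γ (-gradient L (γ t)) t) {t : ℝ} (ht : 0 ≤ t) :
    F (γ t) = F (γ 0) := by
  have hFγ : ∀ s, 0 ≤ s → HasDerivAt (fun s => F (γ s)) 0 s := fun s hs => by
    have h := (hF (γ s)).hasFDerivAt.comp_hasDerivAt s (hγ s hs)
    rwa [map_neg, ← inner_gradient_left, horth, neg_zero] at h
  exact constant_of_has_deriv_right_zero (fun s hs => (hFγ s hs.1).continuousAt.continuousWithinAt)
    (fun s hs => (hFγ s hs.1).hasDerivWithinAt) t ⟨ht, le_rfl⟩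

theorem eq_of_tendsto_of_inner_gradient_eq_zero (hF : Differentiable ℝ F)
    (horth : ∀ x, ⟪gradient F x, gradient L x⟫_ℝ = 0)
    (hγ : ∀ t, 0 ≤ t → HasDerivAt γ (-gradient L (γ t)) t) {x : E}
    (hlim : Tendsto γ atTop (𝓝 x)) : F x = F (γ 0) :=
  tendsto_nhds_unique ((hF x).continuousAt.tendsto.comp hlim) <| tendsto_const_nhds.congr' <|
    eventually_atTop.2 ⟨0, fun _ ht => (comp_eq_of_inner_gradient_eq_zero hF horth hγ ht).symm⟩

end GradientFlow

theorem eq_sqrt_sq_add_four_mul_sub_div_two {x Q C : ℝ} (hx : 0 < x) (hQ : 0 ≤ Q)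
    (hC : C = Q / x - x) : x = (√(C ^ 2 + 4 * Q) - C) / 2 := by
  have hsq : C ^ 2 + 4 * Q = (Q / x + x) ^ 2 := by
    rw [hC]
    field_simp
    ring
  rw [hsq, Real.sqrt_sq (by positivity), hC]
  ring

theorem sum_sq_mul_add_mul_le {ι : Type*} [Fintype ι] (s a d : ι → ℝ) {m : ℝ}
    (hs : ∀ i, s i ^ 2 ≤ m ^ 2) (t : ℝ) :
    ∑ i, (s i * a i + d i * t) ^ 2 ≤ (m ^ 2 + ∑ i, d i ^ 2) * (∑ i, a i ^ 2 + t ^ 2) := by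
  set A := ∑ i, a i ^ 2
  set D := ∑ i, d i ^ 2
  set S := ∑ i, (s i * a i) ^ 2
  set T := ∑ i, s i * a i * d i
  have hexp : ∑ i, (s i * a i + d i * t) ^ 2 = S + 2 * t * T + t ^ 2 * D := by
    simp only [S, T, D, Finset.mul_sum, ← Finset.sum_add_distrib]
    exact Finset.sum_congr rfl fun i _ => by ring
  have hS : S ≤ m ^ 2 * A := by
    simp only [S, A, Finset.mul_sum, mul_pow]
    exact Finset.sum_le_sum fun i _ => mul_le_mul_of_nonneg_right (hs i) (sq_nonneg _)
  have hD : 0 ≤ D := Finset.sum_nonneg fun i _ => sq_nonneg _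
  have hT : T ^ 2 ≤ m ^ 2 * A * D :=
    (Finset.sum_mul_sq_le_sq_mul_sq _ _ _).trans (mul_le_mul_of_nonneg_right hS hD)
  -- AM-GM on `2 t T`, after Cauchy-Schwarz bounds `T ^ 2` by `m ^ 2 A D`
  have hcross : 2 * t * T ≤ m ^ 2 * t ^ 2 + D * A := by
    have hA : 0 ≤ A := Finset.sum_nonneg fun i _ => sq_nonneg _
    refine (le_abs_self _).trans (abs_le_of_sq_le_sq ?_ (by positivity))
    nlinarith [mul_le_mul_of_nonneg_left hT (sq_nonneg (2 * t)), sq_nonneg (m ^ 2 * t ^ 2 - D * A)]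
  rw [hexp]
  nlinarith

theorem le_sharpness {E : Type*} [NormedAddCommGroup E] [NormedSpace ℝ E] {L : E → ℝ} {θ ξ : E}
    {U : ℝ} (hU : ∀ ξ : E, ‖ξ‖ = 1 → fderiv ℝ (fderiv ℝ L) θ ξ ξ ≤ U) (hξ : ‖ξ‖ = 1) :
    fderiv ℝ (fderiv ℝ L) θ ξ ξ ≤ sharpness L θ :=
  le_csSup ⟨U, by rintro _ ⟨ξ, hξ, rfl⟩; exact hU ξ hξ⟩ ⟨ξ, hξ, rfl⟩

theorem sharpness_le {E : Type*} [NormedAddCommGroup E] [NormedSpace ℝ E] {L : E → ℝ} {θ : E}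
    {U : ℝ} (hE : ∃ ξ : E, ‖ξ‖ = 1) (hU : ∀ ξ : E, ‖ξ‖ = 1 → fderiv ℝ (fderiv ℝ L) θ ξ ξ ≤ U) :
    sharpness L θ ≤ U := by
  obtain ⟨ξ, hξ⟩ := hE
  exact csSup_le ⟨_, ξ, hξ, rfl⟩ fun _ ⟨ξ, hξ, h⟩ => h ▸ hU ξ hξ

section TwoLayer

variable {E : Type*} [NormedAddCommGroup E] [InnerProductSpace ℝ E] {ι : Type*}
  {c : ℝ} {σ d : ι → ℝ} {w : ι → E} {b : E}

theorem hasFDerivAt_residual (i : ι) (x : E) :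
    HasFDerivAt (fun θ => σ i * ⟪w i, θ⟫_ℝ * ⟪b, θ⟫_ℝ - d i)
      (σ i • (⟪w i, x⟫_ℝ • innerSL ℝ b + ⟪b, x⟫_ℝ • innerSL ℝ (w i))) x := by
  refine ((((innerSL ℝ (w i)).hasFDerivAt.const_mul (σ i)).mul
    (innerSL ℝ b).hasFDerivAt).sub_const (d i)).congr_fderiv ?_
  ext ξ
  simp
  ring

theorem inner_ne_zero_of_forall_mul_eq {x : E} (hx : ∀ i, σ i * ⟪w i, x⟫_ℝ * ⟪b, x⟫_ℝ = d i)
    (hd : d ≠ 0) : ⟪b, x⟫_ℝ ≠ 0 := by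
  intro hv
  exact hd (funext fun i => by simp [← hx i, hv])

variable [Fintype ι]

-- The paper's `L` and `C` in singular coordinates: `⟪w i, θ⟫` is `o_i`, `⟪b, θ⟫` is `v₁`, and the
-- sum over samples has been collapsed by Parseval over the left singular vectors.
noncomputable def twoLayerLoss (c : ℝ) (σ d : ι → ℝ) (w : ι → E) (b θ : E) : ℝ :=
  c * ∑ i, (σ i * ⟪w i, θ⟫_ℝ * ⟪b, θ⟫_ℝ - d i) ^ 2

noncomputable def layerImbalance (w : ι → E) (b θ : E) : ℝ :=
  ∑ i, ⟪w i, θ⟫_ℝ ^ 2 - ⟪b, θ⟫_ℝ ^ 2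

theorem twoLayerLoss_eq_zero_iff (hc : 0 < c) {x : E} :
    twoLayerLoss c σ d w b x = 0 ↔ ∀ i, σ i * ⟪w i, x⟫_ℝ * ⟪b, x⟫_ℝ = d i := by
  rw [twoLayerLoss, mul_eq_zero_iff_left hc.ne',
    Finset.sum_eq_zero_iff_of_nonneg fun _ _ => sq_nonneg _]
  simp [sub_eq_zero]

theorem fderiv_fderiv_twoLayerLoss_apply {x : E}
    (hx : ∀ i, σ i * ⟪w i, x⟫_ℝ * ⟪b, x⟫_ℝ = d i) (hv : ⟪b, x⟫_ℝ ≠ 0) (ξ : E) :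
    fderiv ℝ (fderiv ℝ (twoLayerLoss c σ d w b)) x ξ ξ =
      2 * c * ∑ i, (σ i * ⟪b, x⟫_ℝ * ⟪w i, ξ⟫_ℝ + d i * ⟪b, ξ⟫_ℝ / ⟪b, x⟫_ℝ) ^ 2 := by
  unfold twoLayerLoss
  rw [fderiv_fderiv_const_mul_sum_sq_apply c hasFDerivAt_residual
    (fun i => by simp only [← innerSL_apply_apply ℝ]; fun_prop) (fun i => sub_eq_zero.2 (hx i))]
  congr! 2 with i
  rw [← hx i]
  field_simp
  simp
  ring

theorem hasFDerivAt_twoLayerLoss (x : E) :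
    HasFDerivAt (twoLayerLoss c σ d w b) (∑ i, (2 * c * (σ i * ⟪w i, x⟫_ℝ * ⟪b, x⟫_ℝ - d i)) •
      σ i • (⟪w i, x⟫_ℝ • innerSL ℝ b + ⟪b, x⟫_ℝ • innerSL ℝ (w i))) x :=
  hasFDerivAt_const_mul_sum_sq c hasFDerivAt_residual x

theorem hasGradientAt_layerImbalance [CompleteSpace E] (x : E) :
    HasGradientAt (layerImbalance w b) (∑ i, (2 * ⟪w i, x⟫_ℝ) • w i - (2 * ⟪b, x⟫_ℝ) • b) x := by
  rw [hasGradientAt_iff_hasFDerivAt]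
  refine ((HasFDerivAt.fun_sum fun i _ => ((innerSL ℝ (w i)).hasFDerivAt (x := x)).pow 2).sub
    (((innerSL ℝ b).hasFDerivAt (x := x)).pow 2)).congr_fderiv ?_
  ext ξ
  simp [InnerProductSpace.toDual_apply_apply, real_inner_comm ξ]

theorem inner_gradient_layerImbalance_gradient_twoLayerLoss [CompleteSpace E]
    (hON : Orthonormal ℝ (Sum.elim w fun _ : Unit => b)) (x : E) :
    ⟪gradient (layerImbalance w b) x, gradient (twoLayerLoss c σ d w b) x⟫_ℝ = 0 := by
  have hw : Orthonormal ℝ w := hON.comp _ Sum.inl_injective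
  have hwb (i : ι) : ⟪w i, b⟫_ℝ = 0 := hON.inner_sumElim_inl_inr i ()
  have hbw (i : ι) : ⟪b, w i⟫_ℝ = 0 := by rw [real_inner_comm, hwb]
  have hb : ⟪b, b⟫_ℝ = 1 := by
    rw [real_inner_self_eq_norm_sq, show ‖b‖ = 1 from hON.norm_eq_one (.inr ()), one_pow]
  rw [real_inner_comm, inner_gradient_left, (hasGradientAt_layerImbalance x).gradient,
    (hasFDerivAt_twoLayerLoss x).fderiv]
  simp only [FunLike.coe_sum, Finset.sum_apply, FunLike.coe_smul, Pi.smul_apply, add_apply,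
    innerSL_apply_apply, smul_eq_mul, inner_sub_right, inner_sum, real_inner_smul_right,
    hw.inner_right_fintype, hwb, hbw, hb, mul_zero, Finset.sum_const_zero, sub_zero, zero_sub]
  exact Finset.sum_eq_zero fun i _ => by ring

theorem layerImbalance_eq_of_tendsto [CompleteSpace E]
    (hON : Orthonormal ℝ (Sum.elim w fun _ : Unit => b)) {θ : ℝ → E}
    (hflow : ∀ t, 0 ≤ t → HasDerivAt θ (-gradient (twoLayerLoss c σ d w b) (θ t)) t) {x : E}
    (hlim : Tendsto θ atTop (𝓝 x)) : layerImbalance w b x = layerImbalance w b (θ 0) :=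
  eq_of_tendsto_of_inner_gradient_eq_zero
    (fun y => (hasGradientAt_layerImbalance y).differentiableAt)
    (inner_gradient_layerImbalance_gradient_twoLayerLoss hON) hflow hlim

theorem layerImbalance_eq_of_forall_mul_eq (hσ : ∀ i, σ i ≠ 0) {x : E}
    (hx : ∀ i, σ i * ⟪w i, x⟫_ℝ * ⟪b, x⟫_ℝ = d i) (hv : ⟪b, x⟫_ℝ ≠ 0) :
    layerImbalance w b x = (∑ i, d i ^ 2 / σ i ^ 2) / ⟪b, x⟫_ℝ ^ 2 - ⟪b, x⟫_ℝ ^ 2 := by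
  rw [layerImbalance, Finset.sum_div]
  congr 1
  refine Finset.sum_congr rfl fun i _ => ?_
  rw [← hx i]
  field_simp [hσ i]

theorem sq_inner_eq_of_tendsto [CompleteSpace E]
    (hON : Orthonormal ℝ (Sum.elim w fun _ : Unit => b)) (hc : 0 < c) (hσ : ∀ i, σ i ≠ 0)
    (hd : d ≠ 0) {θ : ℝ → E}
    (hflow : ∀ t, 0 ≤ t → HasDerivAt θ (-gradient (twoLayerLoss c σ d w b) (θ t)) t) {x : E}
    (hlim : Tendsto θ atTop (𝓝 x)) (hx : twoLayerLoss c σ d w b x = 0) :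
    ⟪b, x⟫_ℝ ^ 2 = (√(layerImbalance w b (θ 0) ^ 2 + 4 * ∑ i, d i ^ 2 / σ i ^ 2)
      - layerImbalance w b (θ 0)) / 2 := by
  have hres := (twoLayerLoss_eq_zero_iff hc).1 hx
  have hv := inner_ne_zero_of_forall_mul_eq hres hd
  refine eq_sqrt_sq_add_four_mul_sub_div_two (by positivity)
    (Finset.sum_nonneg fun i _ => by positivity) ?_
  rw [← layerImbalance_eq_of_tendsto hON hflow hlim, layerImbalance_eq_of_forall_mul_eq hσ hres hv]

theorem sum_sq_inner_add_sq_inner_le (hON : Orthonormal ℝ (Sum.elim w fun _ : Unit => b))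
    (ξ : E) : ∑ i, ⟪w i, ξ⟫_ℝ ^ 2 + ⟪b, ξ⟫_ℝ ^ 2 ≤ ‖ξ‖ ^ 2 := by
  simpa [Fintype.sum_sum_type] using hON.sum_inner_products_le ξ (s := Finset.univ)

theorem fderiv_fderiv_twoLayerLoss_le (hON : Orthonormal ℝ (Sum.elim w fun _ : Unit => b))
    (hc : 0 ≤ c) {i₀ : ι} (hσ₀ : ∀ i, σ i ^ 2 ≤ σ i₀ ^ 2) {x : E}
    (hx : ∀ i, σ i * ⟪w i, x⟫_ℝ * ⟪b, x⟫_ℝ = d i) (hv : ⟪b, x⟫_ℝ ≠ 0) {ξ : E} (hξ : ‖ξ‖ = 1) :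
    fderiv ℝ (fderiv ℝ (twoLayerLoss c σ d w b)) x ξ ξ ≤
      2 * c * (σ i₀ ^ 2 * ⟪b, x⟫_ℝ ^ 2 + (∑ i, d i ^ 2) / ⟪b, x⟫_ℝ ^ 2) := by
  rw [fderiv_fderiv_twoLayerLoss_apply hx hv]
  gcongr
  calc ∑ i, (σ i * ⟪b, x⟫_ℝ * ⟪w i, ξ⟫_ℝ + d i * ⟪b, ξ⟫_ℝ / ⟪b, x⟫_ℝ) ^ 2
      = ∑ i, (σ i * ⟪b, x⟫_ℝ * ⟪w i, ξ⟫_ℝ + d i / ⟪b, x⟫_ℝ * ⟪b, ξ⟫_ℝ) ^ 2 := by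
        simp only [div_mul_eq_mul_div]
    _ ≤ ((σ i₀ * ⟪b, x⟫_ℝ) ^ 2 + ∑ i, (d i / ⟪b, x⟫_ℝ) ^ 2) *
          (∑ i, ⟪w i, ξ⟫_ℝ ^ 2 + ⟪b, ξ⟫_ℝ ^ 2) :=
        sum_sq_mul_add_mul_le _ _ _ (fun i => by
          simpa only [mul_pow] using mul_le_mul_of_nonneg_right (hσ₀ i) (sq_nonneg _)) _
    _ ≤ ((σ i₀ * ⟪b, x⟫_ℝ) ^ 2 + ∑ i, (d i / ⟪b, x⟫_ℝ) ^ 2) * 1 := by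
        gcongr
        simpa [hξ] using sum_sq_inner_add_sq_inner_le hON ξ
    _ = σ i₀ ^ 2 * ⟪b, x⟫_ℝ ^ 2 + (∑ i, d i ^ 2) / ⟪b, x⟫_ℝ ^ 2 := by
        simp only [mul_one, mul_pow, div_pow, Finset.sum_div]

theorem exists_le_fderiv_fderiv_twoLayerLoss
    (hON : Orthonormal ℝ (Sum.elim w fun _ : Unit => b)) (hc : 0 ≤ c) {i₀ : ι} (hσ₀ : σ i₀ ≠ 0)
    {x : E} (hx : ∀ i, σ i * ⟪w i, x⟫_ℝ * ⟪b, x⟫_ℝ = d i) (hv : ⟪b, x⟫_ℝ ≠ 0) :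
    ∃ ξ : E, ‖ξ‖ = 1 ∧ 2 * c * (σ i₀ ^ 2 * ⟪b, x⟫_ℝ ^ 2 + d i₀ ^ 2 / ⟪b, x⟫_ℝ ^ 2) ≤
      fderiv ℝ (fderiv ℝ (twoLayerLoss c σ d w b)) x ξ ξ := by
  have hw : Orthonormal ℝ w := hON.comp _ Sum.inl_injective
  have hwb (i : ι) : ⟪w i, b⟫_ℝ = 0 := hON.inner_sumElim_inl_inr i ()
  have hb : ‖b‖ = 1 := hON.norm_eq_one (.inr ())
  have hbw (i : ι) : ⟪b, w i⟫_ℝ = 0 := by rw [real_inner_comm, hwb]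
  set p := σ i₀ * ⟪b, x⟫_ℝ
  set q := d i₀ / ⟪b, x⟫_ℝ
  set s := √(p ^ 2 + q ^ 2)
  have hs : 0 < s := Real.sqrt_pos.2 (by positivity)
  have hs2 : s ^ 2 = p ^ 2 + q ^ 2 := Real.sq_sqrt (by positivity)
  refine ⟨(p / s) • w i₀ + (q / s) • b, ?_, ?_⟩
  · rw [← pow_eq_one_iff_of_nonneg (norm_nonneg _) two_ne_zero, norm_add_sq_real, norm_smul,
      norm_smul, real_inner_smul_left, real_inner_smul_right, hwb, hw.norm_eq_one, hb]
    simp only [Real.norm_eq_abs, sq_abs, mul_one, mul_zero, add_zero, div_pow, ← add_div, ← hs2]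
    exact div_self (by positivity)
  · rw [fderiv_fderiv_twoLayerLoss_apply hx hv]
    gcongr
    refine le_of_eq_of_le ?_ (Finset.single_le_sum (fun i _ => sq_nonneg _) (Finset.mem_univ i₀))
    simp only [inner_add_right, real_inner_smul_right, hwb, hbw, real_inner_self_eq_norm_sq,
      hw.norm_eq_one, hb, one_pow, mul_one, mul_zero, add_zero, zero_add]
    have key : σ i₀ * ⟪b, x⟫_ℝ * (p / s) + d i₀ * (q / s) / ⟪b, x⟫_ℝ = (p ^ 2 + q ^ 2) / s := by
      simp only [p, q]
      field_simp
    rw [key, ← hs2, pow_two s, mul_self_div_self, hs2]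
    simp only [p, q, mul_pow, div_pow]

theorem sharpness_twoLayerLoss_bounds (hON : Orthonormal ℝ (Sum.elim w fun _ : Unit => b))
    (hc : 0 < c) {i₀ : ι} (hσ₀ : ∀ i, σ i ^ 2 ≤ σ i₀ ^ 2) (hσ₀_ne : σ i₀ ≠ 0) (hd : d ≠ 0) {x : E}
    (hx : twoLayerLoss c σ d w b x = 0) :
    2 * c * (σ i₀ ^ 2 * ⟪b, x⟫_ℝ ^ 2 + d i₀ ^ 2 / ⟪b, x⟫_ℝ ^ 2) ≤
        sharpness (twoLayerLoss c σ d w b) x ∧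
      sharpness (twoLayerLoss c σ d w b) x ≤
        2 * c * (σ i₀ ^ 2 * ⟪b, x⟫_ℝ ^ 2 + (∑ i, d i ^ 2) / ⟪b, x⟫_ℝ ^ 2) := by
  have hres := (twoLayerLoss_eq_zero_iff hc).1 hx
  have hv := inner_ne_zero_of_forall_mul_eq hres hd
  have hU := fun ξ (hξ : ‖ξ‖ = 1) => fderiv_fderiv_twoLayerLoss_le hON hc.le hσ₀ hres hv hξ
  obtain ⟨ξ, hξ, hle⟩ := exists_le_fderiv_fderiv_twoLayerLoss hON hc.le hσ₀_ne hres hv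
  exact ⟨hle.trans (le_sharpness hU hξ), sharpness_le ⟨ξ, hξ⟩ hU⟩

end TwoLayer

section Coordinates

theorem sum_sq_sum_mul_eq_sum_sq {ι κ : Type*} [Fintype ι] [Fintype κ] [DecidableEq ι]
    {e : ι → κ → ℝ} (he : ∀ i j, ∑ n, e i n * e j n = if i = j then 1 else 0) (a : ι → ℝ) :
    ∑ n, (∑ i, a i * e i n) ^ 2 = ∑ i, a i ^ 2 := by
  simp_rw [sq, Finset.sum_mul_sum]
  rw [Finset.sum_comm]
  refine Finset.sum_congr rfl fun i _ => ?_
  rw [Finset.sum_comm]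
  simp_rw [show ∀ j n, a i * e i n * (a j * e j n) = a i * a j * (e i n * e j n) from
    fun _ _ => by ring]
  simp [← Finset.mul_sum, he]

theorem sum_sq_mul_sub_eq_sum_sq {ι κ α : Type*} [Fintype ι] [Fintype κ] [Fintype α]
    [DecidableEq ι] {X : κ → α → ℝ} {y : κ → ℝ} {σ d : ι → ℝ} {e : ι → κ → ℝ} {w : ι → α → ℝ}
    (he : ∀ i j, ∑ n, e i n * e j n = if i = j then 1 else 0)
    (hX : ∀ n m, X n m = ∑ i, σ i * e i n * w i m) (hy : ∀ n, y n = ∑ i, d i * e i n)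
    (u : α → ℝ) (v : ℝ) :
    ∑ n, ((∑ m, X n m * u m) * v - y n) ^ 2 = ∑ i, (σ i * (∑ m, w i m * u m) * v - d i) ^ 2 := by
  have hres (n : κ) : (∑ m, X n m * u m) * v - y n =
      ∑ i, (σ i * (∑ m, w i m * u m) * v - d i) * e i n := by
    simp only [hX, hy, Finset.sum_mul, Finset.mul_sum, sub_mul, Finset.sum_sub_distrib]
    rw [Finset.sum_comm]
    congr 1
    exact Finset.sum_congr rfl fun i _ => Finset.sum_congr rfl fun m _ => by ring
  simp_rw [hres]
  exact sum_sq_sum_mul_eq_sum_sq he _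

variable {α : Type*} [Fintype α]

theorem inner_toLp_sumElim_zero (u : α → ℝ) (θ : EuclideanSpace ℝ (α ⊕ Unit)) :
    ⟪WithLp.toLp 2 (Sum.elim u 0), θ⟫_ℝ = ∑ m, u m * θ (Sum.inl m) := by
  simp [PiLp.inner_apply, Fintype.sum_sum_type, mul_comm]

theorem orthonormal_sumElim_toLp [DecidableEq α] {ι : Type*} [DecidableEq ι] {w : ι → α → ℝ}
    (hw : ∀ i j, ∑ m, w i m * w j m = if i = j then 1 else 0) :
    Orthonormal ℝ (Sum.elim (fun i => WithLp.toLp 2 (Sum.elim (w i) 0))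
      fun _ : Unit => EuclideanSpace.single (Sum.inr ()) (1 : ℝ)) := by
  rw [orthonormal_iff_ite]
  rintro (i | ⟨⟩) (j | ⟨⟩) <;>
    simp [inner_toLp_sumElim_zero, hw, EuclideanSpace.inner_single_left]

end Coordinates

theorem two_layer_gradient_flow_sharpness_at_convergence_general
    (N dd r : ℕ) (hN : 0 < N) (hr : 0 < r)
    (X : Matrix (Fin N) (Fin dd) ℝ)
    (σ : Fin r → ℝ) (e : Fin r → Fin N → ℝ) (w : Fin r → Fin dd → ℝ)
    (dc : Fin r → ℝ) (y : Fin N → ℝ)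
    (hσpos : ∀ i, 0 < σ i)
    (hσdec : ∀ i j : Fin r, i ≤ j → σ j ≤ σ i)
    (he : ∀ i j : Fin r, ∑ n, e i n * e j n = if i = j then (1 : ℝ) else 0)
    (hw : ∀ i j : Fin r, ∑ m, w i m * w j m = if i = j then (1 : ℝ) else 0)
    (hX : ∀ n m, X n m = ∑ i, σ i * e i n * w i m)
    (hy : ∀ n, y n = ∑ i, dc i * e i n)
    (L : EuclideanSpace ℝ (Fin dd ⊕ Unit) → ℝ)
    (hL : ∀ θ, L θ = (1 / (2 * (N : ℝ))) *
      ∑ n, ((∑ m, X n m * θ (Sum.inl m)) * θ (Sum.inr ()) - y n) ^ 2)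
    (Q : ℝ) (hQ : Q = ∑ i, dc i ^ 2 / σ i ^ 2) (hQpos : 0 < Q)
    (C : EuclideanSpace ℝ (Fin dd ⊕ Unit) → ℝ)
    (hC : ∀ θ, C θ = (∑ i, (∑ m, w i m * θ (Sum.inl m)) ^ 2) - θ (Sum.inr ()) ^ 2)
    (θ : ℝ → EuclideanSpace ℝ (Fin dd ⊕ Unit))
    (hflow : ∀ t : ℝ, 0 ≤ t → HasDerivAt θ (-(gradient L (θ t))) t)
    (θinf : EuclideanSpace ℝ (Fin dd ⊕ Unit))
    (hconv : Filter.Tendsto θ Filter.atTop (nhds θinf))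
    (hzero : L θinf = 0) :
    θinf (Sum.inr ()) ^ 2 = (Real.sqrt (C (θ 0) ^ 2 + 4 * Q) - C (θ 0)) / 2 ∧
    (1 / (N : ℝ)) * (σ ⟨0, hr⟩ ^ 2 * θinf (Sum.inr ()) ^ 2
        + dc ⟨0, hr⟩ ^ 2 / θinf (Sum.inr ()) ^ 2) ≤ sharpness L θinf ∧
    sharpness L θinf ≤ (1 / (N : ℝ)) * (σ ⟨0, hr⟩ ^ 2 * θinf (Sum.inr ()) ^ 2
        + (∑ i, dc i ^ 2) / θinf (Sum.inr ()) ^ 2) := by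
  set W : Fin r → EuclideanSpace ℝ (Fin dd ⊕ Unit) := fun i => WithLp.toLp 2 (Sum.elim (w i) 0)
  set B : EuclideanSpace ℝ (Fin dd ⊕ Unit) := EuclideanSpace.single (Sum.inr ()) 1
  have hB (θ : EuclideanSpace ℝ (Fin dd ⊕ Unit)) : θ (Sum.inr ()) = ⟪B, θ⟫_ℝ := by
    simp [B, EuclideanSpace.inner_single_left]
  have hLeq : L = twoLayerLoss (1 / (2 * (N : ℝ))) σ dc W B := funext fun θ => by
    simp [hL, twoLayerLoss, sum_sq_mul_sub_eq_sum_sq he hX hy, W, inner_toLp_sumElim_zero, hB]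
  have hCeq : C = layerImbalance W B := funext fun θ => by
    simp [hC, layerImbalance, W, inner_toLp_sumElim_zero, hB]
  have hd : dc ≠ 0 := by
    rintro rfl
    simp [hQ] at hQpos
  have hσ₀ (i : Fin r) : σ i ^ 2 ≤ σ ⟨0, hr⟩ ^ 2 :=
    pow_le_pow_left₀ (hσpos i).le (hσdec _ _ (Nat.zero_le _)) 2
  have hON := orthonormal_sumElim_toLp hw
  have hc : 0 < 1 / (2 * (N : ℝ)) := by positivity
  have h2c : 1 / (N : ℝ) = 2 * (1 / (2 * (N : ℝ))) := by field_simp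
  subst hLeq hCeq hQ
  rw [hB, h2c]
  exact ⟨sq_inner_eq_of_tendsto hON hc (fun i => (hσpos i).ne') hd hflow hconv hzero,
    sharpness_twoLayerLoss_bounds hON hc hσ₀ (hσpos _).ne' hd hzero⟩

/-- **Sharpness at convergence of gradient flow, two-layer case:**
the limit sharpness is bounded in terms of `(v₁^∞)² = (√(C(θ(0))² + 4Q) − C(θ(0)))/2`,
determined by the layer imbalance at initialization. -/
theorem two_layer_gradient_flow_sharpness_at_convergence
    (N dd r : ℕ) (hN : 0 < N) (hr : 0 < r)
    (X : Matrix (Fin N) (Fin dd) ℝ)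
    (σ : Fin r → ℝ) (e : Fin r → Fin N → ℝ) (w : Fin r → Fin dd → ℝ)
    (dc : Fin r → ℝ) (y : Fin N → ℝ)
    (hσpos : ∀ i, 0 < σ i)
    (hσdec : ∀ i j : Fin r, i ≤ j → σ j ≤ σ i)
    (he : ∀ i j : Fin r, ∑ n, e i n * e j n = if i = j then (1 : ℝ) else 0)
    (hw : ∀ i j : Fin r, ∑ m, w i m * w j m = if i = j then (1 : ℝ) else 0)
    (hX : ∀ n m, X n m = ∑ i, σ i * e i n * w i m)
    (hrank : X.rank = r)
    (hy : ∀ n, y n = ∑ i, dc i * e i n)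
    (L : EuclideanSpace ℝ (Fin dd ⊕ Unit) → ℝ)
    (hL : ∀ θ, L θ = (1 / (2 * (N : ℝ))) *
      ∑ n, ((∑ m, X n m * θ (Sum.inl m)) * θ (Sum.inr ()) - y n) ^ 2)
    (Q : ℝ) (hQ : Q = ∑ i, dc i ^ 2 / σ i ^ 2) (hQpos : 0 < Q)
    (C : EuclideanSpace ℝ (Fin dd ⊕ Unit) → ℝ)
    (hC : ∀ θ, C θ = (∑ i, (∑ m, w i m * θ (Sum.inl m)) ^ 2) - θ (Sum.inr ()) ^ 2)
    (θ : ℝ → EuclideanSpace ℝ (Fin dd ⊕ Unit))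
    (hflow : ∀ t : ℝ, 0 ≤ t → HasDerivAt θ (-(gradient L (θ t))) t)
    (θinf : EuclideanSpace ℝ (Fin dd ⊕ Unit))
    (hconv : Filter.Tendsto θ Filter.atTop (nhds θinf))
    (hzero : L θinf = 0) :
    θinf (Sum.inr ()) ^ 2 = (Real.sqrt (C (θ 0) ^ 2 + 4 * Q) - C (θ 0)) / 2 ∧
    (1 / (N : ℝ)) * (σ ⟨0, hr⟩ ^ 2 * θinf (Sum.inr ()) ^ 2
        + dc ⟨0, hr⟩ ^ 2 / θinf (Sum.inr ()) ^ 2) ≤ sharpness L θinf ∧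
    sharpness L θinf ≤ (1 / (N : ℝ)) * (σ ⟨0, hr⟩ ^ 2 * θinf (Sum.inr ()) ^ 2
        + (∑ i, dc i ^ 2) / θinf (Sum.inr ()) ^ 2) :=
  two_layer_gradient_flow_sharpness_at_convergence_general N dd r hN hr X σ e w dc y hσpos hσdec he
    hw hX hy L hL Q hQ hQpos C hC θ hflow θinf hconv hzero
end

section
/- For the two-layer minimalist model with N ≥ 2 and batch size 1 ≤ B ≤ N, let θ = (u, v₁) be any parameter, let P ∈ ℝ^{N×N} be a random diagonal matrix with exactly B diagonal entries equal to 1 (the set of these entries uniformly distributed over all B-element subsets of {1,…,N}) and the rest 0, and define the one-step SGD iterate θ⁺_SGD = (u − (η/B)XᵀPz(θ)v₁, v₁ − (η/B)z(θ)ᵀPXu) and the GD iterate θ⁺_GD = (u − (η/N)Xᵀz(θ)v₁, v₁ − (η/N)z(θ)ᵀXu), with step size η > 0. Then E_P[C(θ⁺_SGD)] − C(θ⁺_GD) = (η²(N−B))/(B N²(N−1)) · [−(Ψ₂(θ) − Ψ₁(θ))·C(θ) + (Ω₂(θ) − Ω₁(θ))], where Ψ₁(θ) = Σ_{i=1}^r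 σ_i²(z(θ)ᵀe_i)², Ψ₂(θ) = N·Σ_{i=1}^r σ_i²‖z(θ)⊙e_i‖², Ω₁(θ) = Σ_{1≤i<j≤r} [σ_i(z(θ)ᵀe_i)o_j − σ_j(z(θ)ᵀe_j)o_i]², and Ω₂(θ) = N·Σ_{1≤i<j≤r} ‖σ_i(z(θ)⊙e_i)o_j − σ_j(z(θ)⊙e_j)o_i‖² (⊙ denoting the elementwise product of vectors in ℝ^N). -/
/-! Only the projections `o_i = w_iᵀ u` enter the imbalance. A step with batch `A` and rate `c`
sends `o_i ↦ o_i - c v S_i(A)` and `v ↦ v - c ⟨o, S(A)⟩`, where `S_i(A) = Σ_{n ∈ A} σ_i z_n e_i(n)`,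
so the imbalance grows by `c²` times the quadratic form `v² ‖S(A)‖² - ⟨o, S(A)⟩²`. For a uniform
`B`-subset the inclusion probabilities of one and of two samples are `B/N` and
`B(B-1)/(N(N-1))`, which gives the mean of any quadratic form in `S(A)` in terms of the full
batch and of the single samples; Lagrange's identity splits the form into its `Ψ` and `Ω` parts. -/

open scoped BigOperators ENNReal
open MeasureTheory Finset

section Lagrange

variable {ι : Type*} [Fintype ι] [LinearOrder ι]

theorem two_mul_sum_sum_ite_lt_of_symm (g : ι → ι → ℝ) (hg : ∀ i j, g i j = g j i)
    (hg0 : ∀ i, g i i = 0) :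
    2 * ∑ i, ∑ j, (if i < j then g i j else 0) = ∑ i, ∑ j, g i j := by
  have hsplit : ∀ i j, g i j = (if i < j then g i j else 0) + (if j < i then g j i else 0) := by
    intro i j
    rcases lt_trichotomy i j with h | rfl | h
    · simp [h, h.not_gt]
    · simp [hg0]
    · simp [h, h.not_gt, hg i j]
  calc 2 * ∑ i, ∑ j, (if i < j then g i j else 0)
      = ∑ i, ∑ j, (if i < j then g i j else 0) + ∑ j, ∑ i, (if i < j then g i j else 0) := by
        rw [sum_comm (γ := ι)]; ring
    _ = ∑ i, ∑ j, g i j := by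
        simp only [← sum_add_distrib]
        exact sum_congr rfl fun i _ => sum_congr rfl fun j _ => (hsplit i j).symm

theorem sum_sum_ite_lt_mul_sub_mul_sq (a b : ι → ℝ) :
    ∑ i, ∑ j, (if i < j then (a i * b j - a j * b i) ^ 2 else 0)
      = (∑ i, a i ^ 2) * (∑ i, b i ^ 2) - (∑ i, a i * b i) ^ 2 := by
  have h := two_mul_sum_sum_ite_lt_of_symm (fun i j => (a i * b j - a j * b i) ^ 2)
    (fun i j => by ring) (fun i => by ring)
  have hexp : ∑ i, ∑ j, (a i * b j - a j * b i) ^ 2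
      = 2 * ((∑ i, a i ^ 2) * (∑ i, b i ^ 2) - (∑ i, a i * b i) ^ 2) := by
    have hpt : ∀ i j, (a i * b j - a j * b i) ^ 2
        = a i ^ 2 * b j ^ 2 + b i ^ 2 * a j ^ 2 - 2 * (a i * b i) * (a j * b j) := fun i j => by
      ring
    simp only [hpt, sum_add_distrib, sum_sub_distrib, ← mul_sum, ← sum_mul]
    ring
  linarith

end Lagrange

theorem integral_comp_eq_sum_measureReal {Ω γ E : Type*} [MeasurableSpace Ω] (μ : Measure Ω)
    [IsFiniteMeasure μ] [Fintype γ] [NormedAddCommGroup E] [NormedSpace ℝ E] [CompleteSpace E]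
    {s : Ω → γ} (hs : ∀ a, MeasurableSet {ω | s ω = a}) (g : γ → E) :
    ∫ ω, g (s ω) ∂μ = ∑ a, μ.real {ω | s ω = a} • g a := by
  classical
  have hind : (fun ω => g (s ω)) = fun ω => ∑ a, {ω | s ω = a}.indicator (fun _ => g a) ω := by
    ext ω
    simp [Set.indicator_apply]
  rw [hind, integral_finsetSum _ fun a _ => (integrable_const (g a)).indicator (hs a)]
  exact sum_congr rfl fun a _ => integral_indicator_const _ (hs a)

section UniformSubset

variable {α : Type*} [Fintype α]

theorem integral_comp_of_uniform_powersetCard {Ω E : Type*} [MeasurableSpace Ω] (μ : Measure Ω)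
    [IsFiniteMeasure μ] [NormedAddCommGroup E] [NormedSpace ℝ E] [CompleteSpace E]
    {B : ℕ} {s : Ω → Finset α} (hcard : ∀ ω, (s ω).card = B)
    (hs : ∀ A, MeasurableSet {ω | s ω = A})
    (hunif : ∀ A : Finset α, A.card = B → μ {ω | s ω = A} = ((Fintype.card α).choose B : ℝ≥0∞)⁻¹)
    (g : Finset α → E) :
    ∫ ω, g (s ω) ∂μ = ((Fintype.card α).choose B : ℝ)⁻¹ • ∑ A ∈ powersetCard B univ, g A := by
  rw [integral_comp_eq_sum_measureReal μ hs, smul_sum,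
    ← sum_subset (subset_univ (powersetCard B univ))]
  · refine sum_congr rfl fun A hA => ?_
    rw [measureReal_def, hunif A (mem_powersetCard_univ.1 hA)]
    simp
  · intro A _ hA
    have : {ω | s ω = A} = ∅ := Set.eq_empty_of_forall_notMem fun ω (h : s ω = A) =>
      hA (mem_powersetCard_univ.2 (h ▸ hcard ω))
    simp [this]

variable [DecidableEq α]

theorem card_filter_powersetCard_subset_mul_choose (B : ℕ) (t : Finset α) :
    #{A ∈ powersetCard B univ | t ⊆ A} * (Fintype.card α).choose #t
      = (Fintype.card α).choose B * B.choose #t := by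
  by_cases htB : #t ≤ B
  · rw [card_filter_powersetCard_subset t univ B (subset_univ t) htB, card_univ, mul_comm,
      Nat.choose_mul htB]
  · push Not at htB
    rw [Nat.choose_eq_zero_of_lt htB, mul_zero, mul_eq_zero]
    left
    rw [card_eq_zero, filter_eq_empty_iff]
    intro A hA htA
    exact absurd (card_le_card htA) (by rw [(mem_powersetCard_univ.1 hA)]; omega)

theorem sum_powersetCard_sum_mul_sum (B : ℕ) (p q : α → ℝ) :
    ∑ A ∈ powersetCard B univ, (∑ n ∈ A, p n) * (∑ n ∈ A, q n)
      = ∑ n, ∑ m, (#{A ∈ powersetCard B univ | {n, m} ⊆ A} : ℝ) * (p n * q m) := by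
  have hA : ∀ A : Finset α, (∑ n ∈ A, p n) * (∑ n ∈ A, q n)
      = ∑ n, ∑ m, if {n, m} ⊆ A then p n * q m else 0 := by
    intro A
    simp only [insert_subset_iff, singleton_subset_iff, ite_and, sum_ite_irrel, sum_const_zero,
      sum_ite_mem_eq, sum_mul_sum]
  simp only [hA]
  rw [sum_comm]
  refine sum_congr rfl fun n _ => ?_
  rw [sum_comm]
  refine sum_congr rfl fun m _ => ?_
  rw [← sum_filter, sum_const, nsmul_eq_mul]

theorem card_filter_powersetCard_pair_div_choose {B : ℕ} (hN : 2 ≤ Fintype.card α)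
    (hB : B ≤ Fintype.card α) (n m : α) :
    (#{A ∈ powersetCard B univ | {n, m} ⊆ A} : ℝ) / (Fintype.card α).choose B
      = (B : ℝ) * (B - 1) / (Fintype.card α * (Fintype.card α - 1))
        + if n = m then (B : ℝ) * (Fintype.card α - B) / (Fintype.card α * (Fintype.card α - 1))
          else 0 := by
  set N := Fintype.card α
  have hcount := card_filter_powersetCard_subset_mul_choose B {n, m}
  have hNB : (N.choose B : ℝ) ≠ 0 := by exact_mod_cast (Nat.choose_pos hB).ne'
  have hN1 : (N : ℝ) - 1 ≠ 0 := by
    have : (2 : ℝ) ≤ N := by exact_mod_cast hN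
    linarith
  have hN0 : (N : ℝ) ≠ 0 := by positivity
  rw [div_eq_iff hNB]
  split_ifs with hnm
  · subst hnm
    rw [pair_eq_singleton, card_singleton, Nat.choose_one_right, Nat.choose_one_right] at hcount
    have hR : (#{A ∈ powersetCard B univ | {n} ⊆ A} : ℝ) * N = N.choose B * B := by
      exact_mod_cast hcount
    rw [pair_eq_singleton]
    field_simp
    linear_combination (N - 1) * hR
  · rw [card_pair hnm] at hcount
    have hR : (#{A ∈ powersetCard B univ | {n, m} ⊆ A} : ℝ) * (N.choose 2 : ℕ)
        = N.choose B * (B.choose 2 : ℕ) := by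
      exact_mod_cast hcount
    rw [Nat.cast_choose_two, Nat.cast_choose_two] at hR
    field_simp
    linear_combination 2 * hR

theorem sum_powersetCard_sum_mul_sum_div_choose {B : ℕ} (hN : 2 ≤ Fintype.card α)
    (hB : B ≤ Fintype.card α) (p q : α → ℝ) :
    (∑ A ∈ powersetCard B univ, (∑ n ∈ A, p n) * (∑ n ∈ A, q n)) / (Fintype.card α).choose B
      = (B : ℝ) * (B - 1) / (Fintype.card α * (Fintype.card α - 1)) * ((∑ n, p n) * (∑ n, q n))
        + (B : ℝ) * (Fintype.card α - B) / (Fintype.card α * (Fintype.card α - 1))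
          * ∑ n, p n * q n := by
  rw [sum_powersetCard_sum_mul_sum, sum_div]
  simp only [sum_div, mul_div_right_comm _ (p _ * q _),
    card_filter_powersetCard_pair_div_choose hN hB, add_mul, ite_mul, zero_mul, sum_add_distrib,
    sum_ite_eq, mem_univ, if_true, ← mul_sum]
  rw [sum_mul]

end UniformSubset

section TwoLayer

variable {ι κ δ : Type*} [Fintype ι]

def imbalanceGain (o : ι → ℝ) (v : ℝ) (S : ι → ℝ) : ℝ :=
  v ^ 2 * ∑ i, S i ^ 2 - (∑ i, o i * S i) ^ 2

theorem sum_sub_sq_sub_sq_eq_add_imbalanceGain (o S : ι → ℝ) (v c : ℝ) :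
    (∑ i, (o i - c * v * S i) ^ 2) - (v - c * ∑ i, o i * S i) ^ 2
      = (∑ i, o i ^ 2 - v ^ 2) + c ^ 2 * imbalanceGain o v S := by
  have hsq : ∀ i, (o i - c * v * S i) ^ 2
      = o i ^ 2 - 2 * c * v * (o i * S i) + c ^ 2 * v ^ 2 * S i ^ 2 := fun i => by ring
  simp only [hsq, imbalanceGain, sum_add_distrib, sum_sub_distrib, ← mul_sum]
  ring

theorem imbalanceGain_eq [LinearOrder ι] (o : ι → ℝ) (v : ℝ) (S : ι → ℝ) :
    imbalanceGain o v S = -((∑ i, S i ^ 2) * (∑ i, o i ^ 2 - v ^ 2))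
      + ∑ i, ∑ j, if i < j then (S i * o j - S j * o i) ^ 2 else 0 := by
  rw [sum_sum_ite_lt_mul_sub_mul_sq, imbalanceGain]
  simp only [mul_comm (S _)]
  ring

theorem sum_powersetCard_imbalanceGain_div_choose [Fintype κ] [DecidableEq κ] {B : ℕ}
    (hN : 2 ≤ Fintype.card κ) (hB : B ≤ Fintype.card κ) (o : ι → ℝ) (v : ℝ) (a : ι → κ → ℝ) :
    (∑ A ∈ powersetCard B univ, imbalanceGain o v fun i => ∑ n ∈ A, a i n)
        / (Fintype.card κ).choose B
      = (B : ℝ) * (B - 1) / (Fintype.card κ * (Fintype.card κ - 1))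
          * imbalanceGain o v (fun i => ∑ n, a i n)
        + (B : ℝ) * (Fintype.card κ - B) / (Fintype.card κ * (Fintype.card κ - 1))
          * ∑ n, imbalanceGain o v fun i => a i n := by
  have hβ : ∀ A : Finset κ, ∑ i, o i * ∑ n ∈ A, a i n = ∑ n ∈ A, ∑ i, o i * a i n := fun A => by
    simp only [mul_sum]
    exact sum_comm
  have hA : ∀ A : Finset κ, imbalanceGain o v (fun i => ∑ n ∈ A, a i n)
      = v ^ 2 * ∑ i, (∑ n ∈ A, a i n) * (∑ n ∈ A, a i n)
        - (∑ n ∈ A, ∑ i, o i * a i n) * (∑ n ∈ A, ∑ i, o i * a i n) := fun A => by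
    simp only [imbalanceGain, hβ, sq]
  simp only [hA, sum_sub_distrib, ← mul_sum, sub_div, mul_div_assoc]
  rw [sum_comm, sum_div]
  simp only [sum_powersetCard_sum_mul_sum_div_choose hN hB, imbalanceGain]
  simp only [sum_add_distrib, sum_sub_distrib, ← mul_sum, sq]
  rw [sum_comm (s := univ) (t := univ) (f := fun i n => a i n * a i n)]
  ring

theorem sum_imbalanceGain_eq [LinearOrder ι] [Fintype κ] (o : ι → ℝ) (v : ℝ) (a : ι → κ → ℝ) :
    ∑ n, imbalanceGain o v (fun i => a i n) = -((∑ i, ∑ n, a i n ^ 2) * (∑ i, o i ^ 2 - v ^ 2))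
      + ∑ i, ∑ j, if i < j then ∑ n, (a i n * o j - a j n * o i) ^ 2 else 0 := by
  have hlag : ∑ n, ∑ i, ∑ j, (if i < j then (a i n * o j - a j n * o i) ^ 2 else 0)
      = ∑ i, ∑ j, if i < j then ∑ n, (a i n * o j - a j n * o i) ^ 2 else 0 := by
    rw [sum_comm]
    refine sum_congr rfl fun i _ => ?_
    rw [sum_comm]
    simp only [ite_sum_zero]
  simp only [imbalanceGain_eq, sum_add_distrib, sum_neg_distrib, ← sum_mul, hlag]
  rw [sum_comm]

theorem integral_add_mul_imbalanceGain_of_uniform_powersetCard {Ω : Type*} [MeasurableSpace Ω]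
    (μ : Measure Ω) [IsFiniteMeasure μ] [Fintype κ] [DecidableEq κ] {B : ℕ}
    (hN : 2 ≤ Fintype.card κ) (hB : B ≤ Fintype.card κ) {s : Ω → Finset κ}
    (hcard : ∀ ω, (s ω).card = B) (hs : ∀ A, MeasurableSet {ω | s ω = A})
    (hunif : ∀ A : Finset κ, A.card = B → μ {ω | s ω = A} = ((Fintype.card κ).choose B : ℝ≥0∞)⁻¹)
    (o : ι → ℝ) (v : ℝ) (a : ι → κ → ℝ) (C c : ℝ) :
    ∫ ω, C + c * imbalanceGain o v (fun i => ∑ n ∈ s ω, a i n) ∂μ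
      = C + c * ((B : ℝ) * (B - 1) / (Fintype.card κ * (Fintype.card κ - 1))
          * imbalanceGain o v (fun i => ∑ n, a i n)
        + (B : ℝ) * (Fintype.card κ - B) / (Fintype.card κ * (Fintype.card κ - 1))
          * ∑ n, imbalanceGain o v fun i => a i n) := by
  have hNB : ((Fintype.card κ).choose B : ℝ) ≠ 0 := by exact_mod_cast (Nat.choose_pos hB).ne'
  rw [integral_comp_of_uniform_powersetCard μ hcard hs hunif
      (fun A => C + c * imbalanceGain o v (fun i => ∑ n ∈ A, a i n)),
    smul_eq_mul, sum_add_distrib, sum_const, card_powersetCard, card_univ, nsmul_eq_mul, ← mul_sum,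
    mul_add, inv_mul_cancel_left₀ hNB, mul_left_comm, inv_mul_eq_div,
    sum_powersetCard_imbalanceGain_div_choose hN hB]

variable [Fintype δ] {X : Matrix κ δ ℝ} {σ : ι → ℝ} {e : ι → κ → ℝ} {w : ι → δ → ℝ}

theorem sum_mul_row_eq_of_orthonormal [DecidableEq ι]
    (hw : ∀ i j, ∑ m, w i m * w j m = if i = j then 1 else 0)
    (hX : ∀ n m, X n m = ∑ i, σ i * e i n * w i m) (i : ι) (n : κ) :
    ∑ m, w i m * X n m = σ i * e i n := by
  simp only [hX, mul_sum]
  rw [sum_comm]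
  simp only [mul_left_comm (w i _), ← mul_sum, hw, mul_ite, mul_one, mul_zero, sum_ite_eq,
    mem_univ, if_true]

theorem sum_mul_eq_sum_singular (hX : ∀ n m, X n m = ∑ i, σ i * e i n * w i m) (u : δ → ℝ)
    (n : κ) :
    ∑ m, X n m * u m = ∑ i, σ i * e i n * ∑ m, w i m * u m := by
  simp only [hX, sum_mul, mul_sum, mul_assoc]
  exact sum_comm

theorem imbalance_gradient_step [DecidableEq ι]
    (hw : ∀ i j, ∑ m, w i m * w j m = if i = j then 1 else 0)
    (hX : ∀ n m, X n m = ∑ i, σ i * e i n * w i m) (u : δ → ℝ) (v : ℝ) (z : κ → ℝ)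
    (o : ι → ℝ) (ho : ∀ i, o i = ∑ m, w i m * u m) (A : Finset κ) (c : ℝ) :
    (∑ i, (∑ m, w i m * (u m - c * (∑ n ∈ A, X n m * z n) * v)) ^ 2)
        - (v - c * ∑ n ∈ A, z n * ∑ m, X n m * u m) ^ 2
      = (∑ i, o i ^ 2 - v ^ 2)
        + c ^ 2 * imbalanceGain o v (fun i => ∑ n ∈ A, σ i * (z n * e i n)) := by
  have hu : ∀ i, ∑ m, w i m * (u m - c * (∑ n ∈ A, X n m * z n) * v)
      = o i - c * v * ∑ n ∈ A, σ i * (z n * e i n) := fun i => by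
    have hS : ∑ m, w i m * ∑ n ∈ A, X n m * z n = ∑ n ∈ A, σ i * (z n * e i n) :=
      calc ∑ m, w i m * ∑ n ∈ A, X n m * z n = ∑ n ∈ A, (∑ m, w i m * X n m) * z n := by
            simp only [mul_sum, sum_mul, mul_assoc]
            exact sum_comm
        _ = ∑ n ∈ A, σ i * (z n * e i n) := by
            simp only [sum_mul_row_eq_of_orthonormal hw hX, mul_right_comm _ (e i _), mul_assoc]
    rw [ho, ← hS, mul_sum, ← sum_sub_distrib]
    exact sum_congr rfl fun m _ => by ring
  have hv : ∑ n ∈ A, z n * ∑ m, X n m * u m = ∑ i, o i * ∑ n ∈ A, σ i * (z n * e i n) := by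
    simp only [sum_mul_eq_sum_singular hX, ← ho, mul_sum]
    rw [sum_comm]
    exact sum_congr rfl fun i _ => sum_congr rfl fun n _ => by ring
  rw [sum_congr rfl fun i _ => by rw [hu i], hv]
  exact sum_sub_sq_sub_sq_eq_add_imbalanceGain _ _ _ _

end TwoLayer

theorem two_layer_SGD_expected_imbalance_change_general
    (N dd r B : ℕ) (hN : 2 ≤ N) (hB1 : 1 ≤ B) (hBN : B ≤ N)
    (X : Matrix (Fin N) (Fin dd) ℝ)
    (σ : Fin r → ℝ) (e : Fin r → Fin N → ℝ) (w : Fin r → Fin dd → ℝ)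
    (hw : ∀ i j : Fin r, ∑ m, w i m * w j m = if i = j then (1 : ℝ) else 0)
    (hX : ∀ n m, X n m = ∑ i, σ i * e i n * w i m)
    (η : ℝ)
    (u : Fin dd → ℝ) (v : ℝ)
    (z : Fin N → ℝ)
    (o : Fin r → ℝ) (ho : ∀ i, o i = ∑ m, w i m * u m)
    (Cθ : ℝ) (hCθ : Cθ = (∑ i, o i ^ 2) - v ^ 2)
    (Ψ₁ : ℝ) (hΨ₁ : Ψ₁ = ∑ i, σ i ^ 2 * (∑ n, z n * e i n) ^ 2)
    (Ψ₂ : ℝ) (hΨ₂ : Ψ₂ = (N : ℝ) * ∑ i, σ i ^ 2 * ∑ n, (z n * e i n) ^ 2)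
    (Ω₁ : ℝ) (hΩ₁ : Ω₁ = ∑ i, ∑ j, if i < j then
      (σ i * (∑ n, z n * e i n) * o j - σ j * (∑ n, z n * e j n) * o i) ^ 2 else 0)
    (Ω₂ : ℝ) (hΩ₂ : Ω₂ = (N : ℝ) * ∑ i, ∑ j, if i < j then
      (∑ n, (σ i * (z n * e i n) * o j - σ j * (z n * e j n) * o i) ^ 2) else 0)
    -- one gradient descent step
    (uGD : Fin dd → ℝ)
    (huGD : ∀ m, uGD m = u m - (η / (N : ℝ)) * (∑ n, X n m * z n) * v)
    (vGD : ℝ)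
    (hvGD : vGD = v - (η / (N : ℝ)) * ∑ n, z n * (∑ m, X n m * u m))
    -- the random mini-batch: a uniformly random `B`-element subset of the samples
    (Ω' : Type*) [MeasurableSpace Ω'] (μ : Measure Ω') [IsProbabilityMeasure μ]
    (s : Ω' → Finset (Fin N))
    (hcard : ∀ ω, (s ω).card = B)
    (hmeasA : ∀ A : Finset (Fin N), MeasurableSet {ω | s ω = A})
    (hunif : ∀ A : Finset (Fin N), A.card = B →
      μ {ω | s ω = A} = ((N.choose B : ℝ≥0∞))⁻¹)
    -- one stochastic gradient descent step
    (uS : Ω' → Fin dd → ℝ)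
    (huS : ∀ ω m, uS ω m
      = u m - (η / (B : ℝ)) * (∑ n, if n ∈ s ω then X n m * z n else 0) * v)
    (vS : Ω' → ℝ)
    (hvS : ∀ ω, vS ω
      = v - (η / (B : ℝ)) * ∑ n, if n ∈ s ω then z n * (∑ m, X n m * u m) else 0) :
    (∫ ω, ((∑ i, (∑ m, w i m * uS ω m) ^ 2) - vS ω ^ 2) ∂μ)
        - ((∑ i, (∑ m, w i m * uGD m) ^ 2) - vGD ^ 2)
      = (η ^ 2 * ((N : ℝ) - (B : ℝ)))
          / ((B : ℝ) * (N : ℝ) ^ 2 * ((N : ℝ) - 1)) *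
        (-((Ψ₂ - Ψ₁) * Cθ) + (Ω₂ - Ω₁)) := by
  have hN1 : (N : ℝ) - 1 ≠ 0 := by
    have : (2 : ℝ) ≤ N := by exact_mod_cast hN
    linarith
  have hB0 : (B : ℝ) ≠ 0 := Nat.cast_ne_zero.2 (by omega)
  set a : Fin r → Fin N → ℝ := fun i n => σ i * (z n * e i n)
  have hSGD : ∀ ω, (∑ i, (∑ m, w i m * uS ω m) ^ 2) - vS ω ^ 2
      = Cθ + (η / B) ^ 2 * imbalanceGain o v (fun i => ∑ n ∈ s ω, a i n) := fun ω => by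
    simp only [huS, hvS, sum_ite_mem_eq]
    rw [imbalance_gradient_step hw hX u v z o ho, hCθ]
  have hGD : (∑ i, (∑ m, w i m * uGD m) ^ 2) - vGD ^ 2
      = Cθ + (η / N) ^ 2 * imbalanceGain o v (fun i => ∑ n, a i n) := by
    simp only [huGD, hvGD]
    rw [imbalance_gradient_step hw hX u v z o ho, hCθ]
  have hΨΩ₁ : imbalanceGain o v (fun i => ∑ n, a i n) = -(Ψ₁ * Cθ) + Ω₁ := by
    rw [imbalanceGain_eq, hΨ₁, hΩ₁, hCθ]
    simp only [a, ← mul_sum, mul_pow]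
  have hΨΩ₂ : ∑ n, imbalanceGain o v (fun i => a i n) = (-(Ψ₂ * Cθ) + Ω₂) / N := by
    rw [sum_imbalanceGain_eq, hΨ₂, hΩ₂, hCθ]
    simp only [a, mul_pow, ← mul_sum]
    field_simp
  rw [integral_congr_ae (ae_of_all _ hSGD),
    integral_add_mul_imbalanceGain_of_uniform_powersetCard μ (by simpa using hN)
      (by simpa using hBN) hcard hmeasA (by simpa using hunif),
    Fintype.card_fin, hGD, hΨΩ₁, hΨΩ₂]
  field_simp
  ring

/-- **Expected change of layer imbalance after one SGD step relative to GD (two-layer case):**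
`E_P[C(θ⁺_SGD)] − C(θ⁺_GD) = (η²(N−B))/(BN²(N−1))·[−(Ψ₂−Ψ₁)C(θ) + (Ω₂−Ω₁)]`,
where the mini-batch is a uniformly random `B`-element subset of `{1,…,N}`. -/
theorem two_layer_SGD_expected_imbalance_change
    (N dd r B : ℕ) (hN : 2 ≤ N) (hr : 0 < r) (hB1 : 1 ≤ B) (hBN : B ≤ N)
    (X : Matrix (Fin N) (Fin dd) ℝ)
    (σ : Fin r → ℝ) (e : Fin r → Fin N → ℝ) (w : Fin r → Fin dd → ℝ)
    (dc : Fin r → ℝ) (y : Fin N → ℝ)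
    (hσpos : ∀ i, 0 < σ i)
    (hσdec : ∀ i j : Fin r, i ≤ j → σ j ≤ σ i)
    (he : ∀ i j : Fin r, ∑ n, e i n * e j n = if i = j then (1 : ℝ) else 0)
    (hw : ∀ i j : Fin r, ∑ m, w i m * w j m = if i = j then (1 : ℝ) else 0)
    (hX : ∀ n m, X n m = ∑ i, σ i * e i n * w i m)
    (hrank : X.rank = r)
    (hy : ∀ n, y n = ∑ i, dc i * e i n)
    (η : ℝ) (hη : 0 < η)
    (u : Fin dd → ℝ) (v : ℝ)
    (z : Fin N → ℝ) (hz : ∀ n, z n = (∑ m, X n m * u m) * v - y n)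
    (o : Fin r → ℝ) (ho : ∀ i, o i = ∑ m, w i m * u m)
    (Cθ : ℝ) (hCθ : Cθ = (∑ i, o i ^ 2) - v ^ 2)
    (Ψ₁ : ℝ) (hΨ₁ : Ψ₁ = ∑ i, σ i ^ 2 * (∑ n, z n * e i n) ^ 2)
    (Ψ₂ : ℝ) (hΨ₂ : Ψ₂ = (N : ℝ) * ∑ i, σ i ^ 2 * ∑ n, (z n * e i n) ^ 2)
    (Ω₁ : ℝ) (hΩ₁ : Ω₁ = ∑ i, ∑ j, if i < j then
      (σ i * (∑ n, z n * e i n) * o j - σ j * (∑ n, z n * e j n) * o i) ^ 2 else 0)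
    (Ω₂ : ℝ) (hΩ₂ : Ω₂ = (N : ℝ) * ∑ i, ∑ j, if i < j then
      (∑ n, (σ i * (z n * e i n) * o j - σ j * (z n * e j n) * o i) ^ 2) else 0)
    -- one gradient descent step
    (uGD : Fin dd → ℝ)
    (huGD : ∀ m, uGD m = u m - (η / (N : ℝ)) * (∑ n, X n m * z n) * v)
    (vGD : ℝ)
    (hvGD : vGD = v - (η / (N : ℝ)) * ∑ n, z n * (∑ m, X n m * u m))
    -- the random mini-batch: a uniformly random `B`-element subset of the samples
    (Ω' : Type*) [MeasurableSpace Ω'] (μ : Measure Ω') [IsProbabilityMeasure μ]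
    (s : Ω' → Finset (Fin N))
    (hcard : ∀ ω, (s ω).card = B)
    (hmeasA : ∀ A : Finset (Fin N), MeasurableSet {ω | s ω = A})
    (hunif : ∀ A : Finset (Fin N), A.card = B →
      μ {ω | s ω = A} = ((N.choose B : ℝ≥0∞))⁻¹)
    -- one stochastic gradient descent step
    (uS : Ω' → Fin dd → ℝ)
    (huS : ∀ ω m, uS ω m
      = u m - (η / (B : ℝ)) * (∑ n, if n ∈ s ω then X n m * z n else 0) * v)
    (vS : Ω' → ℝ)
    (hvS : ∀ ω, vS ω
      = v - (η / (B : ℝ)) * ∑ n, if n ∈ s ω then z n * (∑ m, X n m * u m) else 0) :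
    (∫ ω, ((∑ i, (∑ m, w i m * uS ω m) ^ 2) - vS ω ^ 2) ∂μ)
        - ((∑ i, (∑ m, w i m * uGD m) ^ 2) - vGD ^ 2)
      = (η ^ 2 * ((N : ℝ) - (B : ℝ)))
          / ((B : ℝ) * (N : ℝ) ^ 2 * ((N : ℝ) - 1)) *
        (-((Ψ₂ - Ψ₁) * Cθ) + (Ω₂ - Ω₁)) :=
  two_layer_SGD_expected_imbalance_change_general N dd r B hN hB1 hBN X σ e w hw hX η u v z o ho Cθ
    hCθ Ψ₁ hΨ₁ Ψ₂ hΨ₂ Ω₁ hΩ₁ Ω₂ hΩ₂ uGD huGD vGD hvGD Ω' μ s hcard hmeasA hunif uS huS vS hvS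
end
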